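/- arXiv:1012.3267 — 10 statements merged into one kernel-verified Lean document; each statement's English description precedes it below -/
import Mathlib

section
/- Let N ≥ 2 and let φ be an A_N-positive primitive automorphism of the free group F_N. Let w ∈ F_N, let k ≥ 1, and set ψ = i_w ∘ φ^k. If u ∈ F_N is nontrivial (u ≠ 1) and ψ(u) = u, then u is not pure: the reduced word of u contains at least one positive letter and at least one negative letter. (Proposition "notpure" of the paper.) -/
/-- A word of the free group is pure positive if its reduced word is nonempty
and all its letters are positive. -/
def PurePos {N : ℕ} (v : FreeGroup (Fin N)) : Prop :=
  v.toWord ≠ [] ∧ ∀ l ∈ v.toWord, l.2 = true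

/-- A word of the free group is pure negative if its reduced word is nonempty
and all its letters are negative. -/
def PureNeg {N : ℕ} (v : FreeGroup (Fin N)) : Prop :=
  v.toWord ≠ [] ∧ ∀ l ∈ v.toWord, l.2 = false

/-- An automorphism of the free group is `A_N`-positive if the image of each
generator is pure positive. -/
def IsPositive {N : ℕ} (φ : MulAut (FreeGroup (Fin N))) : Prop :=
  ∀ a : Fin N, PurePos (φ (FreeGroup.of a))

/-- An `A_N`-positive automorphism is primitive if some power sends each generator
to a word containing every positive letter. -/
def IsPrimitive {N : ℕ} (φ : MulAut (FreeGroup (Fin N))) : Prop :=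
  ∃ k : ℕ, 1 ≤ k ∧ ∀ a b : Fin N, (b, true) ∈ ((φ ^ k) (FreeGroup.of a)).toWord

/-!
The exponent sum `F_N → ℤ` is a conjugacy invariant, and on positive words it is the length.
If `u ≠ 1` is positive and fixed by `i_w ∘ φ^k`, then `u` is conjugate to `φ^(k m)(u)` for all `m`.
For `m` large, every `φ^(k m)(a)` is a positive word containing all `N` letters, and a positive
endomorphism maps positive words to positive words without cancellation, so
`|φ^(k m)(u)| ≥ N |u| > |u|`: the exponent sums differ. If `u` is pure negative, apply this to the
fixed word `u⁻¹`.
-/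

namespace FreeGroup

variable {α β : Type*}

theorem isReduced_of_forall_snd_eq_true {L : List (α × Bool)} (h : ∀ l ∈ L, l.2 = true) :
    IsReduced L :=
  List.Pairwise.isChain <| List.pairwise_of_forall_mem_list fun a ha b hb _ =>
    (h a ha).trans (h b hb).symm

variable [DecidableEq α] [DecidableEq β]

def IsNonneg (x : FreeGroup α) : Prop :=
  ∀ l ∈ x.toWord, l.2 = true

theorem IsNonneg.toWord_mul {x y : FreeGroup α} (hx : IsNonneg x) (hy : IsNonneg y) :
    (x * y).toWord = x.toWord ++ y.toWord := by
  rw [FreeGroup.toWord_mul, IsReduced.reduce_eq]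
  exact isReduced_of_forall_snd_eq_true fun l hl => (List.mem_append.mp hl).elim (hx l) (hy l)

theorem isNonneg_inv_iff {x : FreeGroup α} : IsNonneg x⁻¹ ↔ ∀ l ∈ x.toWord, l.2 = false := by
  simp [IsNonneg, toWord_inv, invRev]

section PositiveHom

variable (f : FreeGroup α →* FreeGroup β)

theorem toWord_map_of_isNonneg (hf : ∀ a, IsNonneg (f (of a))) {x : FreeGroup α}
    (hx : IsNonneg x) :
    (f x).toWord = x.toWord.flatMap fun l => (f (of l.1)).toWord := by
  suffices ∀ L : List (α × Bool), (∀ l ∈ L, l.2 = true) →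
      (f (mk L)).toWord = L.flatMap fun l => (f (of l.1)).toWord by
    simpa only [mk_toWord] using this x.toWord hx
  intro L hL
  induction L with
  | nil => simp [← one_eq_mk]
  | cons l L ih =>
    obtain ⟨a, b⟩ := l
    obtain rfl : b = true := hL _ List.mem_cons_self
    have ihL := ih fun m hm => hL m (List.mem_cons_of_mem _ hm)
    have hL_nonneg : IsNonneg (f (mk L)) := by
      intro m hm
      obtain ⟨l, -, hm⟩ := List.mem_flatMap.mp (ihL ▸ hm)
      exact hf _ m hm
    have hsplit : mk ((a, true) :: L) = of a * mk L := rfl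
    rw [hsplit, _root_.map_mul, (hf a).toWord_mul hL_nonneg, ihL, List.flatMap_cons]

theorem IsNonneg.map (hf : ∀ a, IsNonneg (f (of a))) {x : FreeGroup α} (hx : IsNonneg x) :
    IsNonneg (f x) := by
  intro l hl
  obtain ⟨m, -, hm⟩ := List.mem_flatMap.mp (toWord_map_of_isNonneg f hf hx ▸ hl)
  exact hf _ l hm

theorem mem_toWord_map_of_isNonneg (hf : ∀ a, IsNonneg (f (of a))) {x : FreeGroup α}
    (hx : IsNonneg x) (hx1 : x ≠ 1) {b : β × Bool} (hb : ∀ a, b ∈ (f (of a)).toWord) :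
    b ∈ (f x).toWord := by
  obtain ⟨l, hl⟩ := List.exists_mem_of_ne_nil _ (mt toWord_eq_nil_iff.mp hx1)
  rw [toWord_map_of_isNonneg f hf hx]
  exact List.mem_flatMap.mpr ⟨l, hl, hb l.1⟩

theorem mul_length_le_length_toWord_map (hf : ∀ a, IsNonneg (f (of a))) {x : FreeGroup α}
    (hx : IsNonneg x) {n : ℕ} (hn : ∀ a, n ≤ (f (of a)).toWord.length) :
    n * x.toWord.length ≤ (f x).toWord.length := by
  rw [toWord_map_of_isNonneg f hf hx, List.length_flatMap, mul_comm, ← smul_eq_mul,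
    ← List.length_map (f := fun l : α × Bool => (f (of l.1)).toWord.length)]
  refine List.card_nsmul_le_sum _ _ fun n' hn' => ?_
  obtain ⟨l, -, rfl⟩ := List.mem_map.mp hn'
  exact hn l.1

end PositiveHom

def expSum : FreeGroup α →* Multiplicative ℤ :=
  lift fun _ => Multiplicative.ofAdd 1

theorem IsNonneg.toAdd_expSum {x : FreeGroup α} (hx : IsNonneg x) :
    (expSum x).toAdd = x.toWord.length := by
  conv_lhs => rw [← mk_toWord (x := x)]
  rw [expSum, lift_mk, List.map_congr_left (g := fun _ => Multiplicative.ofAdd 1) fun l hl => by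
    simp [hx l hl]]
  simp

theorem not_isNonneg_of_isConj_map (f : FreeGroup α →* FreeGroup α)
    (hf : ∀ a, IsNonneg (f (of a))) (hlen : ∀ a, 2 ≤ (f (of a)).toWord.length) {u : FreeGroup α}
    (hu : u ≠ 1) (hconj : IsConj u (f u)) : ¬ IsNonneg u := by
  intro hu_nonneg
  have hsum : expSum u = expSum (f u) := isConj_iff_eq.mp (expSum.map_isConj hconj)
  have hlen_eq : (f u).toWord.length = u.toWord.length := by
    have := congrArg Multiplicative.toAdd hsum
    rw [(hu_nonneg.map f hf).toAdd_expSum, hu_nonneg.toAdd_expSum] at this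
    exact_mod_cast this.symm
  have hlen_pos : 0 < u.toWord.length := List.length_pos_iff.mpr (mt toWord_eq_nil_iff.mp hu)
  have := mul_length_le_length_toWord_map f hf hu_nonneg hlen
  omega

end FreeGroup

theorem List.card_le_length_of_forall_mem {α γ : Type*} [Fintype α] {g : α → γ}
    (hg : Function.Injective g) {L : List γ} (hL : ∀ a, g a ∈ L) : Fintype.card α ≤ L.length := by
  classical
  calc Fintype.card α = (Finset.univ.map ⟨g, hg⟩).card := by simp
    _ ≤ L.toFinset.card := Finset.card_le_card fun c hc => by
        obtain ⟨a, -, rfl⟩ := Finset.mem_map.mp hc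
        exact List.mem_toFinset.mpr (hL a)
    _ ≤ L.length := List.toFinset_card_le L

theorem IsConj.inv {G : Type*} [Group G] {a b : G} (h : IsConj a b) : IsConj a⁻¹ b⁻¹ := by
  obtain ⟨c, rfl⟩ := isConj_iff.mp h
  exact isConj_iff.mpr ⟨c, by group⟩

theorem MulAut.isConj_pow_apply {G : Type*} [Monoid G] {ψ : MulAut G} {u : G}
    (h : IsConj u (ψ u)) (n : ℕ) : IsConj u ((ψ ^ n) u) := by
  induction n with
  | zero => exact IsConj.refl u
  | succ n ih =>
    rw [pow_succ', MulAut.mul_apply]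
    exact h.trans (ψ.toMonoidHom.map_isConj ih)

open FreeGroup

theorem IsPositive.isNonneg_pow_apply_of {N : ℕ} {φ : MulAut (FreeGroup (Fin N))}
    (hpos : IsPositive φ) (n : ℕ) (a : Fin N) : IsNonneg ((φ ^ n) (of a)) := by
  induction n with
  | zero => simp [IsNonneg, toWord_of]
  | succ n ih =>
    rw [pow_succ', MulAut.mul_apply]
    exact ih.map φ.toMonoidHom fun b => (hpos b).2

theorem IsPrimitive.exists_forall_mem_toWord_pow_apply_of {N : ℕ}
    {φ : MulAut (FreeGroup (Fin N))} (hpos : IsPositive φ) (hprim : IsPrimitive φ) :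
    ∃ m, ∀ n ≥ m, ∀ a b : Fin N, (b, true) ∈ ((φ ^ n) (of a)).toWord := by
  obtain ⟨m, -, hm⟩ := hprim
  refine ⟨m, fun n hn a b => ?_⟩
  obtain ⟨d, rfl⟩ := Nat.exists_eq_add_of_le hn
  rw [pow_add, MulAut.mul_apply]
  exact mem_toWord_map_of_isNonneg (φ ^ m).toMonoidHom (hpos.isNonneg_pow_apply_of m)
    (hpos.isNonneg_pow_apply_of d a) ((map_ne_one_iff _ (φ ^ d).injective).mpr (of_ne_one a))
    fun c => hm c b

/-- If `ψ = i_w ∘ φ^k` fixes a nontrivial word `u`, then `u` is not pure: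
its reduced word contains a positive letter and a negative letter. -/
theorem fixed_word_not_pure {N : ℕ} (hN : 2 ≤ N)
    (φ : MulAut (FreeGroup (Fin N))) (hpos : IsPositive φ) (hprim : IsPrimitive φ)
    (w : FreeGroup (Fin N)) (k : ℕ) (hk : 1 ≤ k)
    (u : FreeGroup (Fin N)) (hu : u ≠ 1)
    (hfix : w⁻¹ * (φ ^ k) u * w = u) :
    (∃ l ∈ u.toWord, l.2 = true) ∧ (∃ l ∈ u.toWord, l.2 = false) := by
  obtain ⟨m, hm⟩ := hprim.exists_forall_mem_toWord_pow_apply_of hpos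
  have hconj : IsConj u ((φ ^ (k * m)) u) := by
    rw [pow_mul]
    exact MulAut.isConj_pow_apply (isConj_iff.mpr ⟨w⁻¹, by rwa [inv_inv]⟩).symm m
  have hlen (a : Fin N) : 2 ≤ ((φ ^ (k * m)) (of a)).toWord.length :=
    hN.trans <| (Fintype.card_fin N).symm.trans_le <| List.card_le_length_of_forall_mem
      (Prod.mk_left_injective true) (hm _ (Nat.le_mul_of_pos_left m hk) a)
  have hnot (v : FreeGroup (Fin N)) (hv : v ≠ 1) (hc : IsConj v ((φ ^ (k * m)) v)) :
      ¬ IsNonneg v :=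
    not_isNonneg_of_isConj_map (φ ^ (k * m)).toMonoidHom (hpos.isNonneg_pow_apply_of _) hlen hv hc
  refine ⟨?_, by simpa [IsNonneg] using hnot u hu hconj⟩
  have hconj_inv : IsConj u⁻¹ ((φ ^ (k * m)) u⁻¹) :=
    (_root_.map_inv (φ ^ (k * m)) u).symm ▸ hconj.inv
  simpa [isNonneg_inv_iff] using hnot u⁻¹ (inv_ne_one.mpr hu) hconj_inv
end

section
/- Let B be a type and σ : B → List B with σ(b) ≠ [] for every b : B. Define γ₋ : List B → List B by γ₋(l) = σ(last letter of l) ++ (l with its last element removed) for nonempty l (and γ₋([]) = []). Then for every nonempty list l : List B, the iterate of γ₋ applied l.length times to l equals l.flatMap σ, i.e. γ₋^[l.length](l) = σ(l_0) ++ σ(l_1) ++ ⋯ ++ σ(l_p) where l = l_0 l_1 … l_p. (This is the identity γ_{φ₋}^{|u|}(u) = φ(u) for nonempty pure positive words u, used in the proof of the paper's Theorem on finding w from prefix-suffix developments; in particular γ_{φ₋}^{|φ^i(p)|}(φ^i(p)) = φ^{i+1}(p).) -/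
/-- The map `γ₋` : for a nonempty list `l`, `γ₋(l) = σ(last of l) ++ (l minus its last
element)`; the empty list is sent to itself. -/
def gammaMinus {B : Type*} (σ : B → List B) (l : List B) : List B :=
  match l.getLast? with
  | none => []
  | some b => σ b ++ l.dropLast

lemma gammaMinus_concat {B : Type*} (σ : B → List B) (m : List B) (b : B) :
    gammaMinus σ (m ++ [b]) = σ b ++ m := by
  unfold gammaMinus
  rw [List.getLast?_concat, List.dropLast_concat]

lemma gammaMinus_aux {B : Type*} (σ : B → List B) (l : List B) :
    ∀ m : List B, (gammaMinus σ)^[l.length] (m ++ l) = l.flatMap σ ++ m := by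
  induction l using List.reverseRecOn with
  | nil => simp
  | append_singleton l' b ih =>
    intro m
    rw [List.length_append, List.length_singleton, Function.iterate_add_apply,
      Function.iterate_one, ← List.append_assoc, gammaMinus_concat]
    have := ih (σ b ++ m)
    rw [List.append_assoc] at this
    rw [this]
    simp

/-- For every nonempty list `l`, iterating `γ₋` exactly `l.length` times yields
`σ(l₀) ++ σ(l₁) ++ ⋯ ++ σ(l_p)`, i.e. `γ₋^[|l|](l) = l.flatMap σ`. -/
theorem gammaMinus_iterate_length {B : Type*} (σ : B → List B)
    (hσ : ∀ b : B, σ b ≠ []) (l : List B) (hl : l ≠ []) :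
    (gammaMinus σ)^[l.length] l = l.flatMap σ := by
  have := gammaMinus_aux σ l []
  simpa using this
end

section
/- Let B be a type and σ : B → List B with σ(b) ≠ [] for every b : B. Define γ₊ : List B → List B by γ₊(l) = (tail of l) ++ σ(first letter of l) for nonempty l (and γ₊([]) = []). Then for every nonempty list l : List B, the iterate of γ₊ applied l.length times to l equals l.flatMap σ, i.e. γ₊^[l.length](l) = σ(l_0) ++ σ(l_1) ++ ⋯ ++ σ(l_p) where l = l_0 l_1 … l_p. (This is the identity γ_{φ₊}^{|u|}(u) = φ(u) for nonempty pure positive words u, used in the proof of the paper's Theorem on finding w from prefix-suffix developments; in particular γ_{φ₊}^{|φ^i(s)|}(φ^i(s)) = φ^{i+1}(s).) -/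
/-- The map `γ₊` : for a nonempty list `l`, `γ₊(l) = (tail of l) ++ σ(head of l)`;
the empty list is sent to itself. -/
def gammaPlus {B : Type*} (σ : B → List B) : List B → List B
  | [] => []
  | a :: t => t ++ σ a

theorem gammaPlus_aux {B : Type*} (σ : B → List B) (l m : List B) :
    (gammaPlus σ)^[l.length] (l ++ m) = m ++ l.flatMap σ := by
  induction l generalizing m with
  | nil => simp
  | cons a t ih =>
    simp only [List.length_cons, Function.iterate_succ_apply]
    show (gammaPlus σ)^[t.length] (gammaPlus σ (a :: (t ++ m))) = _
    rw [show gammaPlus σ (a :: (t ++ m)) = t ++ (m ++ σ a) from by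
      simp [gammaPlus]]
    rw [ih]
    simp

/-- For every nonempty list `l`, iterating `γ₊` exactly `l.length` times yields
`σ(l₀) ++ σ(l₁) ++ ⋯ ++ σ(l_p)`, i.e. `γ₊^[|l|](l) = l.flatMap σ`. -/
theorem gammaPlus_iterate_length {B : Type*} (σ : B → List B)
    (hσ : ∀ b : B, σ b ≠ []) (l : List B) (hl : l ≠ []) :
    (gammaPlus σ)^[l.length] l = l.flatMap σ := by
  simpa using gammaPlus_aux σ l []
end

section
/- Let N ≥ 2 and let φ be an A_N-positive automorphism of the free group F_N. Then for every v ∈ F_N, the number of orientation changes of the reduced word of φ(v) is at most the number of orientation changes of the reduced word of v. (Claim used repeatedly in the paper, e.g. in the proofs of Propositions on automorphisms with positive indices: "since φ is A_N-positive, the number of orientation changes can not increase when applying φ".) -/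
/-- The number of orientation changes of a word: the number of indices `i` such that
the `i`-th and `(i+1)`-th letters have opposite signs. -/
def orientationChanges {N : ℕ} (l : List (Fin N × Bool)) : ℕ :=
  (l.zip l.tail).countP (fun p => p.1.2 != p.2.2)

namespace OCAux

variable {N : ℕ}

@[simp] lemma oc_nil : orientationChanges ([] : List (Fin N × Bool)) = 0 := rfl

@[simp] lemma oc_single (a : Fin N × Bool) : orientationChanges [a] = 0 := rfl

@[simp] lemma oc_cons_cons (a b : Fin N × Bool) (t : List (Fin N × Bool)) :
    orientationChanges (a :: b :: t) =
      (if a.2 != b.2 then 1 else 0) + orientationChanges (b :: t) := by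
  simp only [orientationChanges, List.tail_cons, List.zip_cons_cons, List.countP_cons]
  by_cases h : a.2 != b.2 <;> simp [h] <;> omega

lemma le_oc_cons (a : Fin N × Bool) (L : List (Fin N × Bool)) :
    orientationChanges L ≤ orientationChanges (a :: L) := by
  cases L with
  | nil => simp
  | cons b t => rw [oc_cons_cons]; omega

/-- Inserting two adjacent letters of opposite signs can only increase
the count of orientation changes. -/
lemma oc_insert_pair (m₁ m₂ : Fin N × Bool) (h : m₁.2 ≠ m₂.2) :
    ∀ (L₁ L₂ : List (Fin N × Bool)),
      orientationChanges (L₁ ++ L₂) ≤ orientationChanges (L₁ ++ m₁ :: m₂ :: L₂) := by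
  have hne : (m₁.2 != m₂.2) = true := by simpa using h
  intro L₁
  induction L₁ with
  | nil =>
    intro L₂
    simp only [List.nil_append, oc_cons_cons, hne]
    have := le_oc_cons m₂ L₂
    omega
  | cons a t ih =>
    intro L₂
    cases t with
    | nil =>
      simp only [List.cons_append, List.nil_append, oc_cons_cons, hne]
      cases L₂ with
      | nil => simp
      | cons c u =>
        rw [oc_cons_cons]
        by_cases h1 : a.2 != c.2 <;> by_cases h2 : a.2 != m₁.2 <;>
          by_cases h3 : m₂.2 != c.2 <;> simp [h1, h2, h3] <;> omega
    | cons b u =>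
      have h1 := ih L₂
      simp only [List.cons_append, oc_cons_cons] at *
      omega

lemma oc_step {L₁ L₂ : List (Fin N × Bool)} (h : FreeGroup.Red.Step L₁ L₂) :
    orientationChanges L₂ ≤ orientationChanges L₁ := by
  cases h with
  | @not L₃ L₄ x b => exact oc_insert_pair (x, b) (x, !b) (by simp) L₃ L₄

lemma oc_red {L₁ L₂ : List (Fin N × Bool)} (h : FreeGroup.Red L₁ L₂) :
    orientationChanges L₂ ≤ orientationChanges L₁ := by
  induction h with
  | refl => exact le_refl _
  | tail _ hstep ih => exact le_trans (oc_step hstep) ih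

lemma oc_reduce (L : List (Fin N × Bool)) :
    orientationChanges (FreeGroup.reduce L) ≤ orientationChanges L :=
  oc_red FreeGroup.reduce.red

/-- orientation changes of a constant-sign nonempty word prepended to `L`. -/
lemma oc_const_append (s : Bool) (x : Fin N) :
    ∀ (A : List (Fin N × Bool)), A ≠ [] → (∀ l ∈ A, l.2 = s) →
      ∀ L, orientationChanges (A ++ L) = orientationChanges ((x, s) :: L) := by
  intro A
  induction A with
  | nil => intro h; exact absurd rfl h
  | cons a t ih =>
    intro _ hall L
    have ha : a.2 = s := hall a (by simp)
    cases t with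
    | nil =>
      cases L with
      | nil => simp
      | cons c u => simp [oc_cons_cons, ha]
    | cons b u =>
      have hb : b.2 = s := hall b (by simp)
      have ht : (∀ l ∈ (b :: u), l.2 = s) := fun l hl => hall l (by simp [hl])
      simp only [List.cons_append, oc_cons_cons, ha, hb, bne_self_eq_false,
        if_false, Nat.zero_add]
      simpa using ih (by simp) ht L

/-- `B` maps each letter to a nonempty word of constant sign equal to the
letter's sign; then flattening preserves orientation changes. -/
lemma oc_flatten (B : Fin N × Bool → List (Fin N × Bool))
    (hne : ∀ l, B l ≠ [])
    (hsign : ∀ l, ∀ m ∈ B l, m.2 = l.2) :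
    ∀ w : List (Fin N × Bool),
      orientationChanges ((w.map B).flatten) = orientationChanges w := by
  intro w
  induction w with
  | nil => simp
  | cons a t ih =>
    cases t with
    | nil =>
      simp only [List.map_cons, List.map_nil, List.flatten_cons, List.flatten_nil,
        List.append_nil]
      rw [show B a = B a ++ [] by simp,
        oc_const_append a.2 a.1 (B a) (hne a) (hsign a) []]
    | cons b u =>
      simp only [List.map_cons, List.flatten_cons] at *
      rw [oc_const_append a.2 a.1 (B a) (hne a) (hsign a)]
      rcases List.exists_cons_of_ne_nil (hne b) with ⟨c, r, hc⟩
      have hcs : c.2 = b.2 := hsign b c (by simp [hc])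
      rw [hc] at ih ⊢
      simp only [List.cons_append, oc_cons_cons] at *
      rw [hcs] at *
      omega

end OCAux

open OCAux in
/-- Applying an `A_N`-positive automorphism cannot increase the number of
orientation changes of a word. -/
theorem orientationChanges_apply_le {N : ℕ} (hN : 2 ≤ N)
    (φ : MulAut (FreeGroup (Fin N))) (hpos : IsPositive φ)
    (v : FreeGroup (Fin N)) :
    orientationChanges ((φ v).toWord) ≤ orientationChanges v.toWord := by
  classical
  set w := v.toWord with hw
  -- the block map
  set B : Fin N × Bool → List (Fin N × Bool) := fun l =>
    if l.2 then (φ (FreeGroup.of l.1)).toWord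
    else FreeGroup.invRev ((φ (FreeGroup.of l.1)).toWord) with hB
  have hne : ∀ l, B l ≠ [] := by
    intro l
    rcases hpos l.1 with ⟨h1, _⟩
    by_cases hl : l.2 <;> simp [hB, hl, FreeGroup.invRev, h1]
  have hsign : ∀ l, ∀ m ∈ B l, m.2 = l.2 := by
    intro l m hm
    rcases hpos l.1 with ⟨_, h2⟩
    by_cases hl : l.2 <;> simp only [hB, hl, if_true, if_false] at hm
    · rw [hl]; exact h2 m hm
    · unfold FreeGroup.invRev at hm
      simp only [Bool.false_eq_true, if_false] at hm
      rw [List.mem_reverse, List.mem_map] at hm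
      obtain ⟨m', hm', heq⟩ := hm
      have := h2 m' hm'
      rw [← heq]
      simp [this]
      simpa using hl
  -- key: φ v = mk (flatten of blocks)
  have hkey : φ v = FreeGroup.mk ((w.map B).flatten) := by
    conv_lhs => rw [← FreeGroup.mk_toWord (x := v), ← hw]
    clear hw
    induction w with
    | nil =>
      simp [show FreeGroup.mk ([] : List (Fin N × Bool)) = 1 from
        FreeGroup.one_eq_mk.symm]
    | cons a t ih =>
      have : FreeGroup.mk (a :: t) = FreeGroup.mk [a] * FreeGroup.mk t := by
        rw [FreeGroup.mul_mk]; rfl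
      rw [this, map_mul, ih]
      have hsingle : φ (FreeGroup.mk [a]) = FreeGroup.mk (B a) := by
        rcases a with ⟨x, b⟩
        cases b with
        | true =>
          have : FreeGroup.mk [(x, true)] = FreeGroup.of x := rfl
          rw [this]
          simp only [hB, if_true]
          rw [FreeGroup.mk_toWord]
        | false =>
          have : FreeGroup.mk [(x, false)] = (FreeGroup.of x)⁻¹ := by
            rw [show FreeGroup.of x = FreeGroup.mk [(x, true)] from rfl,
              FreeGroup.inv_mk]
            rfl
          rw [this, map_inv]
          simp only [hB, Bool.false_eq_true, if_false]
          rw [← FreeGroup.inv_mk, FreeGroup.mk_toWord]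
      rw [hsingle, FreeGroup.mul_mk]
      simp
  rw [hkey, FreeGroup.toWord_mk]
  calc orientationChanges (FreeGroup.reduce ((w.map B).flatten))
      ≤ orientationChanges ((w.map B).flatten) := oc_reduce _
    _ = orientationChanges w := oc_flatten B hne hsign w
end

section
/- Let N ≥ 2 and let φ be an A_N-positive primitive automorphism of the free group F_N. If v ∈ F_N is a pure positive word in which every generator a ∈ A_N occurs, then for every integer h ∈ ℤ one has φ(v^h) ≠ v. (This is the case analysis on h < 0, h = 0, h > 0 at the heart of the paper's Proposition 1.2, stating that an A_N-positive primitive automorphism is not S-periodic.) -/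
/-!
On positive elements of `F_N` the word length is additive, so a positive automorphism does not
shrink them, and `|φ w| = |w|` forces `|φ a| = 1` for every letter `a` of `w`.
If `φ (v ^ (-n)) = v` with `n ≥ 0`, then `v⁻¹ = (φ v) ^ n` is positive, so `v = 1`.
If `φ (v ^ (n + 1)) = v`, then `|v| = |φ v| + |(φ v) ^ n| ≥ |φ v| ≥ |v|`; as every generator occurs
in `v`, `φ` and hence all its powers send generators to generators, contradicting primitivity.
-/

namespace FreeGroup

theorem isReduced_of_forall_snd {α : Type*} {L : List (α × Bool)} (h : ∀ l ∈ L, l.2 = true) :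
    IsReduced L :=
  List.Pairwise.isChain (List.pairwise_of_forall_mem_list fun a ha b hb _ => by rw [h a ha, h b hb])

variable {α β : Type*} [DecidableEq α] [DecidableEq β]

variable (α) in
def positive : Submonoid (FreeGroup α) where
  carrier := {x | ∀ l ∈ x.toWord, l.2 = true}
  mul_mem' {x y} hx hy l hl := by
    rcases List.mem_append.1 ((toWord_mul_sublist x y).subset hl) with h | h
    exacts [hx l h, hy l h]
  one_mem' := by simp

theorem mem_positive {x : FreeGroup α} : x ∈ positive α ↔ ∀ l ∈ x.toWord, l.2 = true := Iff.rfl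

theorem toWord_mk_of_forall_snd {L : List (α × Bool)} (h : ∀ l ∈ L, l.2 = true) :
    (mk L).toWord = L := by
  rw [toWord_mk, (isReduced_of_forall_snd h).reduce_eq]

theorem mk_mem_positive {L : List (α × Bool)} (h : ∀ l ∈ L, l.2 = true) : mk L ∈ positive α := by
  rwa [mem_positive, toWord_mk_of_forall_snd h]

theorem of_mem_positive (a : α) : of a ∈ positive α := by simp [mem_positive]

theorem toWord_mul_of_mem_positive {x y : FreeGroup α} (hx : x ∈ positive α)
    (hy : y ∈ positive α) : (x * y).toWord = x.toWord ++ y.toWord := by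
  rw [toWord_mul, (isReduced_of_forall_snd fun l hl => ?_).reduce_eq]
  rcases List.mem_append.1 hl with h | h
  exacts [hx l h, hy l h]

theorem norm_mul_of_mem_positive {x y : FreeGroup α} (hx : x ∈ positive α)
    (hy : y ∈ positive α) : norm (x * y) = norm x + norm y := by
  simp only [norm, toWord_mul_of_mem_positive hx hy, List.length_append]

theorem eq_one_of_mem_positive_of_inv_mem {x : FreeGroup α} (hx : x ∈ positive α)
    (hx' : x⁻¹ ∈ positive α) : x = 1 := by
  rw [← toWord_eq_nil_iff, List.eq_nil_iff_forall_not_mem]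
  intro l hl
  have := hx' (l.1, !l.2) (by simpa [toWord_inv, invRev] using hl)
  simp [hx l hl] at this

theorem submonoid_closure_range_of : Submonoid.closure (Set.range (of (α := α))) = positive α := by
  refine le_antisymm (Submonoid.closure_le.2 (Set.range_subset_iff.2 of_mem_positive))
    fun x hx => ?_
  rw [mem_positive] at hx
  rw [← mk_toWord (x := x)]
  generalize x.toWord = L at hx ⊢
  induction L with
  | nil => exact one_mem _
  | cons l L ih =>
    obtain ⟨a, b⟩ := l
    obtain rfl : b = true := hx (a, b) List.mem_cons_self
    rw [show mk ((a, true) :: L) = of a * mk L by rw [of, mul_mk]; rfl]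
    exact mul_mem (Submonoid.subset_closure ⟨a, rfl⟩) (ih fun l hl => hx l (.tail _ hl))

theorem exists_eq_mul_of_mul_of_mem_toWord {x : FreeGroup α} (hx : x ∈ positive α) {a : α}
    (ha : (a, true) ∈ x.toWord) :
    ∃ y ∈ positive α, ∃ z ∈ positive α, x = y * of a * z := by
  obtain ⟨L₁, L₂, hL⟩ := List.append_of_mem ha
  rw [mem_positive, hL] at hx
  refine ⟨mk L₁, mk_mem_positive fun l hl => hx l (by simp [hl]),
    mk L₂, mk_mem_positive fun l hl => hx l (by simp [hl]), ?_⟩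
  rw [← mk_toWord (x := x), hL, of, mul_mk, mul_mk]
  simp

theorem exists_eq_of_of_norm_le_one {x : FreeGroup α} (hx : x ∈ positive α) (hx₁ : x ≠ 1)
    (h : norm x ≤ 1) : ∃ a, x = of a := by
  have : norm x = 1 := le_antisymm h (Nat.one_le_iff_ne_zero.2 (mt norm_eq_zero.1 hx₁))
  obtain ⟨⟨a, b⟩, hab⟩ := List.length_eq_one_iff.1 this
  obtain rfl : b = true := hx (a, b) (by simp [hab])
  exact ⟨a, toWord_injective (by rw [hab, toWord_of])⟩

section Hom

variable {F : Type*} [FunLike F (FreeGroup α) (FreeGroup β)] [MonoidHomClass F _ _] (f : F)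

theorem map_mem_positive (hf : ∀ a, f (of a) ∈ positive β) {x : FreeGroup α}
    (hx : x ∈ positive α) : f x ∈ positive β := by
  rw [← submonoid_closure_range_of] at hx
  induction hx using Submonoid.closure_induction with
  | mem _ h => obtain ⟨a, rfl⟩ := h; exact hf a
  | one => simp
  | mul x y _ _ hx hy => simpa using mul_mem hx hy

variable {f}

theorem norm_le_norm_map (hf : ∀ a, f (of a) ∈ positive β) (hf₁ : ∀ a, f (of a) ≠ 1)
    {x : FreeGroup α} (hx : x ∈ positive α) : norm x ≤ norm (f x) := by
  rw [← submonoid_closure_range_of] at hx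
  induction hx using Submonoid.closure_induction with
  | mem _ h =>
    obtain ⟨a, rfl⟩ := h
    simpa [norm_of, Nat.one_le_iff_ne_zero, norm_eq_zero] using hf₁ a
  | one => simp
  | mul x y hx hy ihx ihy =>
    rw [submonoid_closure_range_of] at hx hy
    rw [_root_.map_mul, norm_mul_of_mem_positive hx hy,
      norm_mul_of_mem_positive (map_mem_positive f hf hx) (map_mem_positive f hf hy)]
    exact add_le_add ihx ihy

theorem norm_map_of_le_one (hf : ∀ a, f (of a) ∈ positive β) (hf₁ : ∀ a, f (of a) ≠ 1)
    {x : FreeGroup α} (hx : x ∈ positive α) (hle : norm (f x) ≤ norm x) {a : α}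
    (ha : (a, true) ∈ x.toWord) : norm (f (of a)) ≤ 1 := by
  obtain ⟨y, hy, z, hz, rfl⟩ := exists_eq_mul_of_mul_of_mem_toWord hx ha
  have hfy := map_mem_positive f hf hy
  have hnorm : norm (y * of a * z) = norm y + 1 + norm z := by
    rw [norm_mul_of_mem_positive (mul_mem hy (of_mem_positive a)) hz,
      norm_mul_of_mem_positive hy (of_mem_positive a), norm_of]
  have hnorm_map : norm (f (y * of a * z)) = norm (f y) + norm (f (of a)) + norm (f z) := by
    rw [_root_.map_mul, _root_.map_mul,
      norm_mul_of_mem_positive (mul_mem hfy (hf a)) (map_mem_positive f hf hz),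
      norm_mul_of_mem_positive hfy (hf a)]
  have := norm_le_norm_map hf hf₁ hy
  have := norm_le_norm_map hf hf₁ hz
  omega

end Hom

end FreeGroup

open FreeGroup

theorem purePos_iff {N : ℕ} {v : FreeGroup (Fin N)} :
    PurePos v ↔ v ∈ positive (Fin N) ∧ v ≠ 1 := by
  rw [PurePos, Ne, toWord_eq_nil_iff, and_comm, mem_positive]

section MulAut

variable {N : ℕ} {φ : MulAut (FreeGroup (Fin N))}

theorem IsPositive.apply_of_mem_positive (hφ : IsPositive φ) (a : Fin N) :
    φ (of a) ∈ positive (Fin N) :=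
  (purePos_iff.1 (hφ a)).1

theorem IsPositive.apply_of_ne_one (hφ : IsPositive φ) (a : Fin N) : φ (of a) ≠ 1 :=
  (purePos_iff.1 (hφ a)).2

theorem IsPrimitive.not_forall_exists_apply_of_eq_of (hN : 2 ≤ N) (hφ : IsPrimitive φ) :
    ¬ ∀ a, ∃ b, φ (of a) = of b := by
  intro hφ₁
  have hpow : ∀ k a, ∃ b, (φ ^ k) (of a) = of b := by
    intro k
    induction k with
    | zero => exact fun a => ⟨a, rfl⟩
    | succ k ih =>
      intro a
      obtain ⟨b, hb⟩ := ih a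
      obtain ⟨c, hc⟩ := hφ₁ b
      exact ⟨c, by rw [pow_succ', MulAut.mul_apply, hb, hc]⟩
  obtain ⟨k, -, hk⟩ := hφ
  obtain ⟨b, hb⟩ := hpow k ⟨0, by omega⟩
  have h₀ := hk ⟨0, by omega⟩ ⟨0, by omega⟩
  have h₁ := hk ⟨0, by omega⟩ ⟨1, by omega⟩
  simp only [hb, toWord_of, List.mem_singleton, Prod.mk.injEq, Fin.ext_iff, and_true] at h₀ h₁
  omega

end MulAut

/-- If `v` is a pure positive word containing all the generators, then for every
integer `h` we have `φ(vʰ) ≠ v`. -/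
theorem apply_zpow_ne {N : ℕ} (hN : 2 ≤ N)
    (φ : MulAut (FreeGroup (Fin N))) (hpos : IsPositive φ) (hprim : IsPrimitive φ)
    (v : FreeGroup (Fin N)) (hv : PurePos v)
    (hall : ∀ a : Fin N, (a, true) ∈ v.toWord) :
    ∀ h : ℤ, φ (v ^ h) ≠ v := by
  obtain ⟨hv, hv₁⟩ := purePos_iff.1 hv
  have hφ := hpos.apply_of_mem_positive
  have hφv := map_mem_positive φ hφ hv
  intro h heq
  obtain ⟨n, rfl | rfl⟩ := h.eq_nat_or_neg
  · cases n with
    | zero => exact hv₁ (by simpa using heq.symm)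
    | succ n =>
      rw [zpow_natCast, map_pow, pow_succ'] at heq
      have hle : norm (φ v) ≤ norm v := by
        have := norm_mul_of_mem_positive hφv (pow_mem hφv n)
        rw [heq] at this
        omega
      refine hprim.not_forall_exists_apply_of_eq_of hN fun a => ?_
      exact exists_eq_of_of_norm_le_one (hφ a) (hpos.apply_of_ne_one a)
        (norm_map_of_le_one hφ hpos.apply_of_ne_one hv hle (hall a))
  · rw [zpow_neg, zpow_natCast, _root_.map_inv, map_pow, inv_eq_iff_eq_inv] at heq
    exact hv₁ (eq_one_of_mem_positive_of_inv_mem hv (heq ▸ pow_mem hφv n))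
end

section
/- Let N ≥ 2 and let φ be an A_N-positive primitive automorphism of the free group F_N. Then for every nonempty pure word u ∈ F_N, the length |φ^k(u)| of the reduced word of φ^k(u) tends to infinity as k → ∞; in particular, for every nonempty pure word u there exists k ≥ 1 such that |φ^k(u)| > |u|. (Growth claim used in the paper, e.g. in the proof of the Proposition that a nonempty word fixed by i_w ∘ φ^k is not pure.) -/
/-!
A positive automorphism acts on a positive word letter by letter and without cancellation, so
`|ψ v|` is the sum of `|ψ a|` over the letters `a` of `v`. Primitivity with `N ≥ 2` gives a power
`φ ^ p` with `|φ ^ p (a)| ≥ 2` for every generator, hence `|φ ^ (k + p) (u)| > |φ ^ k (u)|` along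
the pure positive words `φ ^ k (u)`, and a sequence of naturals increasing along every arithmetic
progression of step `p` tends to infinity. Pure negative words reduce to pure positive ones by
inversion, which preserves length.
-/

namespace FreeGroup

variable {α β : Type*}

theorem isReduced_of_forall_snd_eq {L : List (α × Bool)} {b : Bool} (h : ∀ l ∈ L, l.2 = b) :
    IsReduced L :=
  List.Pairwise.isChain <| List.pairwise_of_forall_mem_list fun x hx y hy _ => by
    rw [h x hx, h y hy]

theorem list_prod_eq_mk_flatten [DecidableEq α] (ws : List (FreeGroup α)) :
    ws.prod = mk (ws.map toWord).flatten := by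
  induction ws with
  | nil => rfl
  | cons w ws ih => rw [List.prod_cons, ih, ← mk_toWord (x := w), mul_mk]; simp

theorem map_mk_of_forall_snd [Group β] (ψ : FreeGroup α →* β) {L : List (α × Bool)}
    (hL : ∀ l ∈ L, l.2 = true) : ψ (mk L) = (L.map fun l => ψ (of l.1)).prod := by
  rw [← lift.apply_symm_apply ψ, lift_mk]
  congr 1
  refine List.map_congr_left fun l hl => ?_
  simp [hL l hl]

variable [DecidableEq α] [DecidableEq β]

theorem toWord_map_of_forall_snd (ψ : FreeGroup α →* FreeGroup β)
    (hψ : ∀ a, ∀ l ∈ (ψ (of a)).toWord, l.2 = true) {v : FreeGroup α}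
    (hv : ∀ l ∈ v.toWord, l.2 = true) :
    (ψ v).toWord = (v.toWord.map fun l => (ψ (of l.1)).toWord).flatten := by
  rw [← mk_toWord (x := v), map_mk_of_forall_snd ψ hv, list_prod_eq_mk_flatten, toWord_mk,
    List.map_map, mk_toWord]
  refine (isReduced_of_forall_snd_eq (b := true) ?_).reduce_eq
  simp only [List.mem_flatten, List.mem_map]
  rintro l ⟨_, ⟨x, -, rfl⟩, hl⟩
  exact hψ x.1 l hl

theorem mul_length_le_length_map (ψ : FreeGroup α →* FreeGroup β)
    (hψ : ∀ a, ∀ l ∈ (ψ (of a)).toWord, l.2 = true) {c : ℕ}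
    (hc : ∀ a, c ≤ (ψ (of a)).toWord.length) {v : FreeGroup α}
    (hv : ∀ l ∈ v.toWord, l.2 = true) :
    c * v.toWord.length ≤ (ψ v).toWord.length := by
  rw [toWord_map_of_forall_snd ψ hψ hv, List.length_flatten, List.map_map]
  calc c * v.toWord.length = (v.toWord.map fun _ => c).sum := by simp [mul_comm]
    _ ≤ _ := List.sum_le_sum fun l _ => hc l.1

end FreeGroup

open FreeGroup

section

variable {N : ℕ}

theorem PurePos.map {ψ : MulAut (FreeGroup (Fin N))} (hψ : IsPositive ψ)
    {v : FreeGroup (Fin N)} (hv : PurePos v) : PurePos (ψ v) := by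
  have hword := toWord_map_of_forall_snd ψ.toMonoidHom (fun a => (hψ a).2) hv.2
  simp only [MulEquiv.coe_toMonoidHom] at hword
  rw [PurePos, hword]
  refine ⟨?_, ?_⟩
  · obtain ⟨l, hl⟩ := List.exists_mem_of_ne_nil _ hv.1
    rw [ne_eq, List.flatten_eq_nil_iff]
    exact fun h => (hψ l.1).1 (h _ (List.mem_map_of_mem hl))
  · simp only [List.mem_flatten, List.mem_map]
    rintro l ⟨_, ⟨x, -, rfl⟩, hl⟩
    exact (hψ x.1).2 l hl

theorem purePos_of (a : Fin N) : PurePos (of a) := by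
  simp [PurePos, toWord_of]

theorem PurePos.pow_apply {φ : MulAut (FreeGroup (Fin N))} (hφ : IsPositive φ)
    {v : FreeGroup (Fin N)} (hv : PurePos v) (k : ℕ) : PurePos ((φ ^ k) v) := by
  induction k with
  | zero => exact hv
  | succ k ih => rw [pow_succ', MulAut.mul_apply]; exact ih.map hφ

theorem PureNeg.inv {v : FreeGroup (Fin N)} (hv : PureNeg v) : PurePos v⁻¹ := by
  simp only [PurePos, toWord_inv, invRev, ne_eq, List.reverse_eq_nil_iff, List.map_eq_nil_iff,
    List.mem_reverse, List.mem_map]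
  refine ⟨hv.1, ?_⟩
  rintro _ ⟨l, hl, rfl⟩
  simp [hv.2 l hl]

theorem two_le_length_of_forall_mem (hN : 2 ≤ N) {w : List (Fin N × Bool)}
    (hw : ∀ b : Fin N, (b, true) ∈ w) : 2 ≤ w.length := by
  have hsub : [((⟨0, by omega⟩ : Fin N), true), (⟨1, by omega⟩, true)] ⊆ w := by
    simp [hw]
  simpa using (List.subperm_of_subset (by simp) hsub).length_le

theorem IsPrimitive.exists_length_lt_length_pow_apply (hN : 2 ≤ N)
    {φ : MulAut (FreeGroup (Fin N))} (hpos : IsPositive φ) (hprim : IsPrimitive φ) :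
    ∃ k, 1 ≤ k ∧ ∀ v, PurePos v → v.toWord.length < ((φ ^ k) v).toWord.length := by
  obtain ⟨k, hk, hmem⟩ := hprim
  refine ⟨k, hk, fun v hv => ?_⟩
  have hdouble : 2 * v.toWord.length ≤ ((φ ^ k) v).toWord.length :=
    mul_length_le_length_map (φ ^ k).toMonoidHom
      (fun a => ((purePos_of a).pow_apply hpos k).2)
      (fun a => two_le_length_of_forall_mem hN (hmem a)) hv.2
  have hne : 0 < v.toWord.length := List.length_pos_iff.2 hv.1
  omega

end

theorem Nat.tendsto_atTop_of_lt_add {f : ℕ → ℕ} {p : ℕ} (hp : 0 < p) (hf : ∀ k, f k < f (k + p)) :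
    Filter.Tendsto f Filter.atTop Filter.atTop := by
  have hbound : ∀ n, n / p ≤ f n := by
    intro n
    induction n using Nat.strong_induction_on with
    | _ n ih =>
      rcases lt_or_ge n p with hn | hn
      · simp [Nat.div_eq_of_lt hn]
      · obtain ⟨m, rfl⟩ := Nat.exists_eq_add_of_le' hn
        have hm := ih m (by omega)
        rw [Nat.add_div_right m hp]
        exact Nat.succ_le_of_lt (hm.trans_lt (hf m))
  exact Filter.tendsto_atTop_mono hbound (Nat.tendsto_div_const_atTop hp.ne')

/-- For a nonempty pure word `u`, the lengths `|φ^k(u)|` tend to infinity with `k`;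
in particular some `k ≥ 1` satisfies `|φ^k(u)| > |u|`. -/
theorem length_apply_pow_tendsto_atTop {N : ℕ} (hN : 2 ≤ N)
    (φ : MulAut (FreeGroup (Fin N))) (hpos : IsPositive φ) (hprim : IsPrimitive φ)
    (u : FreeGroup (Fin N)) (hu : PurePos u ∨ PureNeg u) :
    Filter.Tendsto (fun k : ℕ => ((φ ^ k) u).toWord.length) Filter.atTop Filter.atTop ∧
      ∃ k : ℕ, 1 ≤ k ∧ u.toWord.length < ((φ ^ k) u).toWord.length := by
  obtain ⟨v, hv, hlen⟩ : ∃ v, PurePos v ∧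
      ∀ k : ℕ, ((φ ^ k) u).toWord.length = ((φ ^ k) v).toWord.length := by
    rcases hu with hu | hu
    · exact ⟨u, hu, fun _ => rfl⟩
    · exact ⟨u⁻¹, hu.inv, fun k => by rw [_root_.map_inv, toWord_inv, invRev_length]⟩
  obtain ⟨p, hp, hgrow⟩ := hprim.exists_length_lt_length_pow_apply hN hpos
  have hstep : ∀ k, ((φ ^ k) v).toWord.length < ((φ ^ (k + p)) v).toWord.length := fun k => by
    rw [add_comm, pow_add, MulAut.mul_apply]
    exact hgrow _ (hv.pow_apply hpos k)
  have hlen_zero : u.toWord.length = v.toWord.length := by simpa using hlen 0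
  simp only [hlen, hlen_zero]
  refine ⟨Nat.tendsto_atTop_of_lt_add hp hstep, p, hp, ?_⟩
  simpa using hstep 0
end

section
/- Let N ≥ 2, let φ be an A_N-positive primitive automorphism of the free group F_N, let w ∈ F_N, k ≥ 1, and set ψ = i_w ∘ φ^k. Let u ∈ F_N be ψ-reduced, with reduced word u_0 … u_p, and let v ∈ F_N be nonempty with ψ(v) = v such that neither u nor u^{-1} is a prefix of v and neither u nor u^{-1} is a suffix of v. Then there exists a nonempty v''' ∈ F_N such that u·v·u^{-1} = u_0 * v''' * u_0^{-1}; that is, the reduced word of u v u^{-1} is the single letter u_0, followed by the reduced word of v''', followed by the single letter u_0^{-1}. (Lemma "case3safety" of the paper.) -/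
/-- `x * y` is cancellation-free: the reduced word of the product is the
concatenation of the reduced words. -/
def NoCancel {N : ℕ} (x y : FreeGroup (Fin N)) : Prop :=
  (x * y).toWord = x.toWord ++ y.toWord

/-- `x` is a prefix of `v`: `v = x * y` without cancellation. -/
def IsPrefixOf {N : ℕ} (x v : FreeGroup (Fin N)) : Prop :=
  ∃ y, v = x * y ∧ NoCancel x y

/-- `x` is a suffix of `v`: `v = y * x` without cancellation. -/
def IsSuffixOf {N : ℕ} (x v : FreeGroup (Fin N)) : Prop :=
  ∃ y, v = y * x ∧ NoCancel y x

/-- `u` is `ψ`-reduced: `u` is nontrivial and fixed by `ψ`, cyclically reduced,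
its first and last letters have opposite signs, and no nonempty strict prefix
or suffix of `u` is fixed by `ψ`. -/
def PsiReduced {N : ℕ} (ψ : FreeGroup (Fin N) → FreeGroup (Fin N))
    (u : FreeGroup (Fin N)) : Prop :=
  u ≠ 1 ∧ ψ u = u ∧
  (∀ f l : Fin N × Bool, u.toWord.head? = some f → u.toWord.getLast? = some l →
    l ≠ (f.1, !f.2) ∧ l.2 = !f.2) ∧
  (∀ x, x ≠ 1 → x ≠ u → IsPrefixOf x u → ψ x ≠ x) ∧
  (∀ x, x ≠ 1 → x ≠ u → IsSuffixOf x u → ψ x ≠ x)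

/-!
Put `z = u v u⁻¹`, which is fixed by `ψ`. If the letters of `u` all cancelled in `u · (v u⁻¹)`,
then `v u⁻¹ = u⁻¹ * z` without cancellation; comparing this with the cancellation between `v`
and `u⁻¹` shows that either `u⁻¹` is a prefix of `v`, or `z` is a strict suffix of `u⁻¹`, so
that `z⁻¹` is a nonempty strict prefix of `u` fixed by `ψ`. Both are excluded, hence `z` starts
with `u₀`. The same argument for `v⁻¹` (which has `u⁻¹` as a prefix iff `v` has `u` as a
suffix) shows that `z⁻¹ = u v⁻¹ u⁻¹` starts with `u₀`, i.e. `z` ends with `u₀⁻¹`. As `z` is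
reduced, it is neither `u₀` nor `u₀ u₀⁻¹`, so the middle part is nonempty.
-/

namespace FreeGroup

variable {α : Type*} [DecidableEq α]

theorem exists_reduce_append_eq {L₁ : List (α × Bool)} (h₁ : IsReduced L₁) :
    ∀ {L₂ : List (α × Bool)}, IsReduced L₂ →
      ∃ a c b, L₁ = a ++ c ∧ L₂ = invRev c ++ b ∧ reduce (L₁ ++ L₂) = a ++ b := by
  induction L₁ using List.reverseRecOn with
  | nil => exact fun {L₂} h₂ => ⟨[], [], L₂, rfl, rfl, h₂.reduce_eq⟩
  | append_singleton L ℓ ih =>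
    intro L₂ h₂
    rcases L₂ with _ | ⟨m, L₂⟩
    · exact ⟨L ++ [ℓ], [], [], by simp, rfl, by simpa using h₁.reduce_eq⟩
    by_cases hℓm : ℓ.1 = m.1 → ℓ.2 = m.2
    · have hred : IsReduced (L ++ [ℓ] ++ m :: L₂) :=
        h₁.append_overlap (isReduced_cons_cons.mpr ⟨hℓm, h₂⟩) (List.cons_ne_nil _ _)
      exact ⟨L ++ [ℓ], [], m :: L₂, by simp, rfl, hred.reduce_eq⟩
    · obtain ⟨x, b⟩ := ℓ
      obtain rfl : m = (x, !b) := by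
        obtain ⟨m₁, m₂⟩ := m
        simp only [Classical.not_imp] at hℓm
        obtain ⟨rfl, hb⟩ := hℓm
        simpa [Bool.eq_not_iff, eq_comm] using hb
      obtain ⟨a, c, b', rfl, rfl, hab⟩ :=
        ih (h₁.infix ⟨[], [_], rfl⟩) (L₂ := L₂) (h₂.infix ⟨[(x, !b)], [], by simp⟩)
      refine ⟨a, c ++ [(x, b)], b', by simp, by simp [invRev], ?_⟩
      rw [← hab, ← reduce.Step.eq (Red.Step.not (L₁ := a ++ c) (x := x) (b := b))]
      simp

theorem exists_toWord_mul_eq_append (x y : FreeGroup α) :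
    ∃ a c b, x.toWord = a ++ c ∧ y.toWord = invRev c ++ b ∧ (x * y).toWord = a ++ b := by
  rw [toWord_mul]
  exact exists_reduce_append_eq isReduced_toWord isReduced_toWord

theorem head?_toWord_mul_or (x y : FreeGroup α) :
    (x * y).toWord.head? = x.toWord.head? ∨ y.toWord = x⁻¹.toWord ++ (x * y).toWord := by
  obtain ⟨a, c, b, hx, hy, hxy⟩ := exists_toWord_mul_eq_append x y
  rcases eq_or_ne a [] with rfl | ha
  · right
    rw [hy, hxy, toWord_inv, hx, List.nil_append, List.nil_append]
  · left
    rw [hxy, hx, List.head?_append_of_ne_nil _ ha, List.head?_append_of_ne_nil _ ha]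

theorem head?_toWord_conj_or {u v : FreeGroup α} (h : ¬ u⁻¹.toWord <+: v.toWord) :
    (u * v * u⁻¹).toWord.head? = u.toWord.head? ∨
      ((u * v * u⁻¹)⁻¹.toWord <+: u.toWord ∧ (u * v * u⁻¹)⁻¹ ≠ u) := by
  set z := u * v * u⁻¹
  rcases head?_toWord_mul_or u (v * u⁻¹) with hhead | hvu
  · exact .inl (by rwa [← mul_assoc] at hhead)
  right
  rw [← mul_assoc] at hvu
  obtain ⟨a, c, b, hv, hu, hvu'⟩ := exists_toWord_mul_eq_append v u⁻¹
  have hab : u⁻¹.toWord ++ z.toWord = a ++ b := hvu ▸ hvu'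
  have hlen : u⁻¹.toWord.length + z.toWord.length = a.length + b.length := by
    simpa using congrArg List.length hab
  have hlt : ¬ u⁻¹.toWord.length ≤ a.length := fun hle =>
    h ((List.prefix_of_prefix_length_le ⟨_, hab⟩ ⟨b, rfl⟩ hle).trans ⟨c, hv.symm⟩)
  have hzb : z.toWord <:+ b := List.suffix_of_suffix_length_le ⟨_, hab⟩ ⟨a, rfl⟩ (by omega)
  have hbu : b <:+ u⁻¹.toWord := ⟨invRev c, hu.symm⟩
  have hzu : z.toWord.length < u⁻¹.toWord.length := by have := hbu.length_le; omega
  obtain ⟨r, hr⟩ := hzb.trans hbu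
  refine ⟨⟨invRev r, ?_⟩, fun h => ?_⟩
  · rw [toWord_inv, ← invRev_append, hr, toWord_inv, invRev_invRev]
  · rw [← h, inv_inv] at hzu
    exact lt_irrefl _ hzu

theorem exists_toWord_eq_of_head?_eq_head?_inv {z : FreeGroup α} {f : α × Bool}
    (h : z.toWord.head? = some f) (h' : z⁻¹.toWord.head? = some f) :
    ∃ m : FreeGroup α, m ≠ 1 ∧ z.toWord = [f] ++ m.toWord ++ [(f.1, !f.2)] := by
  have hlast : z.toWord.getLast? = some (f.1, !f.2) := by
    rw [toWord_inv, invRev, List.head?_reverse, List.getLast?_map] at h'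
    obtain ⟨l, hl, rfl⟩ := Option.map_eq_some_iff.mp h'
    simp [hl]
  obtain ⟨t, hz⟩ := List.head?_eq_some_iff.mp h
  rw [hz] at hlast
  rcases List.eq_nil_or_concat' t with rfl | ⟨m, l, rfl⟩
  · simp [Prod.ext_iff] at hlast
  obtain rfl : l = (f.1, !f.2) := by
    rwa [← List.cons_append, List.getLast?_concat, Option.some_inj] at hlast
  have hred : IsReduced (f :: (m ++ [(f.1, !f.2)])) := hz ▸ isReduced_toWord
  have hm : (mk m).toWord = m := by
    rw [toWord_mk, (hred.infix ⟨[f], [(f.1, !f.2)], by simp⟩).reduce_eq]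
  refine ⟨mk m, fun h1 => ?_, by rw [hz, hm]; simp⟩
  rw [← toWord_eq_nil_iff, hm] at h1
  subst h1
  simp [isReduced_cons_cons] at hred

end FreeGroup

section

variable {N : ℕ}

theorem NoCancel.inv {x y : FreeGroup (Fin N)} (h : NoCancel x y) : NoCancel y⁻¹ x⁻¹ := by
  rw [NoCancel, ← mul_inv_rev, FreeGroup.toWord_inv, h, FreeGroup.invRev_append,
    FreeGroup.toWord_inv, FreeGroup.toWord_inv]

theorem IsPrefixOf.inv {x v : FreeGroup (Fin N)} (h : IsPrefixOf x v) : IsSuffixOf x⁻¹ v⁻¹ := by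
  obtain ⟨y, rfl, hxy⟩ := h
  exact ⟨y⁻¹, mul_inv_rev x y, hxy.inv⟩

theorem isPrefixOf_of_toWord_prefix {x v : FreeGroup (Fin N)} (h : x.toWord <+: v.toWord) :
    IsPrefixOf x v := by
  obtain ⟨r, hr⟩ := h
  have hr' : (FreeGroup.mk r).toWord = r := by
    rw [FreeGroup.toWord_mk,
      ((FreeGroup.isReduced_toWord (x := v)).infix ⟨x.toWord, [], by simp [hr]⟩).reduce_eq]
  have hv : v = x * FreeGroup.mk r := by
    rw [← FreeGroup.mk_toWord (x := v), ← hr, ← FreeGroup.mul_mk, FreeGroup.mk_toWord]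
  exact ⟨FreeGroup.mk r, hv, by rw [NoCancel, ← hv, ← hr, hr']⟩

theorem exists_toWord_conj_eq_of_psiReduced (ψ : FreeGroup (Fin N) →* FreeGroup (Fin N))
    {u v : FreeGroup (Fin N)} (hu : PsiReduced ψ u) (hv : v ≠ 1) (hfix : ψ v = v)
    (hinv : ¬ IsPrefixOf u⁻¹ v) (hsuf : ¬ IsSuffixOf u v) :
    ∃ m : FreeGroup (Fin N), m ≠ 1 ∧ ∃ f : Fin N × Bool, u.toWord.head? = some f ∧
      (u * v * u⁻¹).toWord = [f] ++ m.toWord ++ [(f.1, !f.2)] := by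
  obtain ⟨-, hufix, -, hpre, -⟩ := hu
  set z := u * v * u⁻¹
  have hzfix : ψ z = z := by simp only [z, map_mul, map_inv, hufix, hfix]
  have hz1 : z ≠ 1 := by simpa [z, mul_inv_eq_one] using hv
  have not_strict_prefix (y : FreeGroup (Fin N)) (hy : ψ y = y) (hy1 : y ≠ 1) :
      ¬ (y.toWord <+: u.toWord ∧ y ≠ u) :=
    fun ⟨hyu, hne⟩ => hpre y hy1 hne (isPrefixOf_of_toWord_prefix hyu) hy
  have hhead : z.toWord.head? = u.toWord.head? :=
    (FreeGroup.head?_toWord_conj_or (hinv ∘ isPrefixOf_of_toWord_prefix)).resolve_right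
      (not_strict_prefix _ (by rw [map_inv, hzfix]) (inv_ne_one.mpr hz1))
  have hlast : z⁻¹.toWord.head? = u.toWord.head? := by
    have hinv' : ¬ u⁻¹.toWord <+: v⁻¹.toWord := fun h =>
      hsuf (by simpa using (isPrefixOf_of_toWord_prefix h).inv)
    have := (FreeGroup.head?_toWord_conj_or hinv').resolve_right
    rw [show u * v⁻¹ * u⁻¹ = z⁻¹ by simp [z, mul_assoc], inv_inv] at this
    exact this (not_strict_prefix z hzfix hz1)
  obtain ⟨f, hf⟩ := Option.ne_none_iff_exists'.mp
    (mt List.head?_eq_none_iff.mp (mt FreeGroup.toWord_eq_nil_iff.mp hz1))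
  obtain ⟨m, hm1, hm⟩ :=
    FreeGroup.exists_toWord_eq_of_head?_eq_head?_inv hf (hlast.trans (hhead.symm.trans hf))
  exact ⟨m, hm1, f, hhead ▸ hf, hm⟩

end

theorem case3safety_general {N : ℕ}
    (φ : MulAut (FreeGroup (Fin N)))
    (w : FreeGroup (Fin N)) (k : ℕ)
    (ψ : FreeGroup (Fin N) → FreeGroup (Fin N))
    (hψ : ψ = fun x => w⁻¹ * (φ ^ k) x * w)
    (u : FreeGroup (Fin N)) (hu : PsiReduced ψ u)
    (v : FreeGroup (Fin N)) (hv : v ≠ 1) (hfix : ψ v = v)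
    (h2 : ¬ IsPrefixOf u⁻¹ v)
    (h3 : ¬ IsSuffixOf u v) :
    ∃ v''' : FreeGroup (Fin N), v''' ≠ 1 ∧
      ∃ f : Fin N × Bool, u.toWord.head? = some f ∧
        (u * v * u⁻¹).toWord = [f] ++ v'''.toWord ++ [(f.1, !f.2)] := by
  obtain rfl : ψ = (MulAut.conj w⁻¹ * φ ^ k).toMonoidHom := by
    funext x
    simp [hψ]
  exact exists_toWord_conj_eq_of_psiReduced _ hu hv hfix h2 h3

/-- Lemma "case3safety": if `u` is `ψ`-reduced with first letter `u₀`, and `v ≠ 1`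
is fixed by `ψ` with neither `u` nor `u⁻¹` a prefix or suffix of `v`, then there is
a nonempty `v'''` with `u·v·u⁻¹ = u₀ * v''' * u₀⁻¹` without cancellation. -/
theorem case3safety {N : ℕ} (hN : 2 ≤ N)
    (φ : MulAut (FreeGroup (Fin N))) (hpos : IsPositive φ) (hprim : IsPrimitive φ)
    (w : FreeGroup (Fin N)) (k : ℕ) (hk : 1 ≤ k)
    (ψ : FreeGroup (Fin N) → FreeGroup (Fin N))
    (hψ : ψ = fun x => w⁻¹ * (φ ^ k) x * w)
    (u : FreeGroup (Fin N)) (hu : PsiReduced ψ u)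
    (v : FreeGroup (Fin N)) (hv : v ≠ 1) (hfix : ψ v = v)
    (h1 : ¬ IsPrefixOf u v) (h2 : ¬ IsPrefixOf u⁻¹ v)
    (h3 : ¬ IsSuffixOf u v) (h4 : ¬ IsSuffixOf u⁻¹ v) :
    ∃ v''' : FreeGroup (Fin N), v''' ≠ 1 ∧
      ∃ f : Fin N × Bool, u.toWord.head? = some f ∧
        (u * v * u⁻¹).toWord = [f] ++ v'''.toWord ++ [(f.1, !f.2)] :=
  case3safety_general φ w k ψ hψ u hu v hv hfix h2 h3
end

section
/- Let N ≥ 2 and work in the free group F_N. Let x ∈ F_N be nontrivial, such that the first letter of the reduced word of x is positive and the last letter is negative. Let w ∈ F_N be such that w·x·w^{-1} = w * x * w^{-1}, i.e. the reduced word of w x w^{-1} is the concatenation of the reduced words of w, x and w^{-1} without cancellation. If the number of orientation changes of w x w^{-1} equals the number of orientation changes of x, then w is trivial or pure positive. (The orientation-change counting step established in the proof of the paper's Lemma "case3purity".) -/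
lemma pairs_append {α : Type*} (a b : List α) (ha : a ≠ []) (hb : b ≠ []) :
    (a ++ b).zip (a ++ b).tail =
      a.zip a.tail ++ (a.getLast ha, b.head hb) :: b.zip b.tail := by
  induction a with
  | nil => exact absurd rfl ha
  | cons x a ih =>
    cases a with
    | nil =>
      cases b with
      | nil => exact absurd rfl hb
      | cons y b => simp [List.zip]
    | cons y a =>
      have h := ih (by simp)
      simp only [List.cons_append, List.tail_cons, List.zip_cons_cons] at h ⊢
      rw [h]
      simp [List.getLast_cons]

lemma all_eq_of_count_zero {N : ℕ} (l : List (Fin N × Bool))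
    (h : (l.zip l.tail).countP (fun p => p.1.2 != p.2.2) = 0) (hl : l ≠ []) :
    ∀ a ∈ l, a.2 = (l.getLast hl).2 := by
  induction l with
  | nil => exact absurd rfl hl
  | cons x l ih =>
    cases l with
    | nil => intro a ha; simp at ha; simp [ha]
    | cons y l =>
      simp only [List.zip_cons_cons, List.tail_cons, List.countP_cons] at h
      have h1 : ((y :: l).zip l).countP (fun p => p.1.2 != p.2.2) = 0 := by omega
      have h2 : x.2 = y.2 := by
        by_contra hxy
        simp [hxy] at h
      intro a ha
      rcases List.mem_cons.1 ha with rfl | ha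
      · rw [List.getLast_cons (by simp)]
        rw [h2]
        exact ih (by simpa using h1) (by simp) y (by simp)
      · rw [List.getLast_cons (by simp)]
        exact ih (by simpa using h1) (by simp) a ha

/-- If `x` is nontrivial with positive first letter and negative last letter, and
`w·x·w⁻¹` is cancellation-free with the same number of orientation changes as `x`,
then `w` is trivial or pure positive. -/
theorem orientation_count_purity {N : ℕ} (hN : 2 ≤ N)
    (x w : FreeGroup (Fin N)) (hx : x ≠ 1)
    (hhead : ∀ f ∈ x.toWord.head?, f.2 = true)
    (hlast : ∀ f ∈ x.toWord.getLast?, f.2 = false)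
    (hnc : (w * x * w⁻¹).toWord = w.toWord ++ x.toWord ++ w⁻¹.toWord)
    (hoc : orientationChanges (w * x * w⁻¹).toWord = orientationChanges x.toWord) :
    w = 1 ∨ PurePos w := by
  by_cases hw : w = 1
  · exact Or.inl hw
  right
  have hu : w.toWord ≠ [] := fun h => hw (FreeGroup.toWord_eq_nil_iff.1 h)
  have hv : x.toWord ≠ [] := fun h => hx (FreeGroup.toWord_eq_nil_iff.1 h)
  have hu' : w⁻¹.toWord ≠ [] := fun h => hw (by
    have := FreeGroup.toWord_eq_nil_iff.1 h
    simpa using congrArg (·⁻¹) this)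
  have huv : w.toWord ++ x.toWord ≠ [] := by simp [hu]
  rw [hnc] at hoc
  unfold orientationChanges at hoc
  rw [pairs_append (w.toWord ++ x.toWord) w⁻¹.toWord huv hu',
    pairs_append w.toWord x.toWord hu hv] at hoc
  simp only [List.countP_append, List.countP_cons] at hoc
  have hheadv : (x.toWord.head hv).2 = true := hhead _ (by rw [List.head?_eq_head hv]; rfl)
  rw [hheadv] at hoc
  have hL : (w.toWord.getLast hu).2 = true := by
    by_contra hL
    rw [Bool.not_eq_true] at hL
    simp [hL] at hoc
    omega
  rw [hL] at hoc
  simp only [bne_self_eq_false, if_false] at hoc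
  have hcount : (w.toWord.zip w.toWord.tail).countP (fun p => p.1.2 != p.2.2) = 0 := by
    omega
  refine ⟨hu, fun l hl => ?_⟩
  rw [all_eq_of_count_zero w.toWord hcount hu l hl]
  exact hL
end

section
/- Let N ≥ 2 and let φ be an A_N-positive automorphism of the free group F_N. Then for every v ∈ F_N, the number of illegal pairs of the reduced word of φ(v) is at most the number of illegal pairs of the reduced word of v. (Claim used in the proof of the paper's Proposition on attracting points outside the half lamination: "illegal pairs can only appear in the images of illegal pairs", so applying φ does not increase their number.) -/
/-- The pair of letters `x y` is illegal for `φ` if applying some power of `φ` to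
the two-letter word `x·y` yields a cancellation. -/
def IllegalPair {N : ℕ} (φ : MulAut (FreeGroup (Fin N))) (x y : Fin N × Bool) : Prop :=
  ∃ m : ℕ, ((φ ^ m) (FreeGroup.mk [x] * FreeGroup.mk [y])).toWord.length <
    ((φ ^ m) (FreeGroup.mk [x])).toWord.length +
      ((φ ^ m) (FreeGroup.mk [y])).toWord.length

open Classical in
/-- The number of illegal pairs of a word: the number of indices `i` such that the
pair formed by the `i`-th and `(i+1)`-th letters is illegal. -/
noncomputable def illegalCount {N : ℕ} (φ : MulAut (FreeGroup (Fin N)))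
    (l : List (Fin N × Bool)) : ℕ :=
  (l.zip l.tail).countP (fun p => decide (IllegalPair φ p.1 p.2))

/-!
Every letter of `φ(x)` has the sign of `x`, and no power of `φ` creates cancellation in a
product of two words of the same sign, so pairs of letters of equal sign are legal. If the
pair `y x` is legal, so is the pair formed by the last letter of `φ(y)` and the first letter
of `φ(x)`: a cancellation of that pair under `φ^m` would be one of `y x` under `φ^(m+1)`. Hence
`φ` maps a word without illegal pairs to the plain concatenation of the images of its letters,
again without illegal pairs. Cutting `v` at its `k` illegal pairs into `k + 1` such words,
`φ(v)` is the reduced product of their images; reducing `u * w` keeps a prefix of `u` and a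
suffix of `w`, so each of the `k` products creates at most one illegal pair.
-/

namespace FreeGroup

variable {α : Type*} {L L₁ L₂ : List (α × Bool)} {b : Bool}

theorem exists_prefix_suffix_reduce_append_eq [DecidableEq α] (h₁ : IsReduced L₁)
    (h₂ : IsReduced L₂) : ∃ A B, A <+: L₁ ∧ B <:+ L₂ ∧ reduce (L₁ ++ L₂) = A ++ B := by
  induction L₁ with
  | nil => exact ⟨[], L₂, List.nil_prefix, List.suffix_refl L₂, h₂.reduce_eq⟩
  | cons x L ih =>
    obtain ⟨A, B, hA, hB, hred⟩ := ih (h₁.infix (List.suffix_cons x L).isInfix)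
    rw [List.cons_append, reduce.cons, hred]
    rcases A with _ | ⟨a, A⟩
    · rcases B with _ | ⟨c, B⟩
      · exact ⟨[x], [], by simp, List.nil_suffix, rfl⟩
      · dsimp only [List.nil_append]
        split_ifs
        · exact ⟨[], B, List.nil_prefix, (List.suffix_cons c B).trans hB, rfl⟩
        · exact ⟨[x], c :: B, by simp, hB, rfl⟩
    · obtain ⟨S, rfl⟩ := hA
      have hxa := (isReduced_cons_cons.1 h₁).1
      refine ⟨x :: a :: A, B, by simp, hB, ?_⟩
      dsimp only [List.cons_append]
      rw [if_neg fun h => absurd (hxa h.1) (by simp [h.2])]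

def HasSign (b : Bool) (L : List (α × Bool)) : Prop := ∀ p ∈ L, p.2 = b

theorem hasSign_append : HasSign b (L₁ ++ L₂) ↔ HasSign b L₁ ∧ HasSign b L₂ :=
  List.forall_mem_append

theorem HasSign.invRev (h : HasSign b L) : HasSign (!b) (invRev L) := by
  simp only [HasSign, FreeGroup.invRev, List.mem_reverse, List.mem_map]
  rintro _ ⟨p, hp, rfl⟩
  simp [h p hp]

theorem HasSign.isReduced (h : HasSign b L) : IsReduced L :=
  List.Pairwise.isChain <| List.pairwise_of_forall_mem_list fun p hp q hq _ =>
    (h p hp).trans (h q hq).symm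

theorem HasSign.toWord_mul [DecidableEq α] {u w : FreeGroup α} (hu : HasSign b u.toWord)
    (hw : HasSign b w.toWord) : (u * w).toWord = u.toWord ++ w.toWord := by
  rw [FreeGroup.toWord_mul, (hasSign_append.2 ⟨hu, hw⟩).isReduced.reduce_eq]

theorem toWord_apply_mk_singleton_ne_nil [DecidableEq α] (φ : MulAut (FreeGroup α))
    (x : α × Bool) : (φ (mk [x])).toWord ≠ [] := by
  rw [Ne, toWord_eq_nil_iff, map_eq_one_iff _ φ.injective, ← toWord_eq_nil_iff, toWord_mk,
    reduce_singleton]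
  exact List.cons_ne_nil x []

end FreeGroup

open FreeGroup Classical

variable {N : ℕ} {φ : MulAut (FreeGroup (Fin N))} {b : Bool}

theorem illegalPair_iff {x y : Fin N × Bool} : IllegalPair φ x y ↔
    ∃ m : ℕ, norm ((φ ^ m) (mk [x] * mk [y])) < norm ((φ ^ m) (mk [x])) + norm ((φ ^ m) (mk [y])) :=
  Iff.rfl

theorem illegalPair_self_inv (x : Fin N × Bool) : IllegalPair φ x (x.1, !x.2) :=
  ⟨0, by simp [mul_mk]⟩

theorem snd_eq_of_not_illegalPair {x y : Fin N × Bool} (h : ¬IllegalPair φ x y) :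
    x.1 = y.1 → x.2 = y.2 := by
  intro h₁
  by_contra h₂
  obtain ⟨a, c⟩ := x
  obtain ⟨a', c'⟩ := y
  obtain rfl : a = a' := h₁
  obtain rfl : c' = !c := by cases c <;> cases c' <;> simp_all
  exact h (illegalPair_self_inv _)

namespace IsPositive

theorem hasSign_toWord_apply_mk_singleton (hφ : IsPositive φ) (x : Fin N × Bool) :
    HasSign x.2 (φ (mk [x])).toWord := by
  obtain ⟨a, _ | _⟩ := x
  · have : mk [(a, false)] = (of a)⁻¹ := by rw [of, inv_mk]; rfl
    rw [this, _root_.map_inv, toWord_inv]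
    exact HasSign.invRev (hφ a).2
  · exact (hφ a).2

theorem hasSign_toWord_apply_mk (hφ : IsPositive φ) :
    ∀ {L : List (Fin N × Bool)}, HasSign b L → HasSign b (φ (mk L)).toWord
  | [], _ => by simp [← one_eq_mk, HasSign]
  | x :: L, h => by
    obtain ⟨hx, hL⟩ := List.forall_mem_cons.1 h
    have hx' : HasSign b (φ (mk [x])).toWord := hx ▸ hφ.hasSign_toWord_apply_mk_singleton x
    have hL' := hφ.hasSign_toWord_apply_mk hL
    rw [← List.singleton_append, ← mul_mk, _root_.map_mul, hx'.toWord_mul hL']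
    exact hasSign_append.2 ⟨hx', hL'⟩

theorem pow (hφ : IsPositive φ) : ∀ m : ℕ, IsPositive (φ ^ m)
  | 0 => fun a => by simp [PurePos]
  | m + 1 => fun a => by
    refine ⟨toWord_apply_mk_singleton_ne_nil _ (a, true), ?_⟩
    rw [pow_succ, MulAut.mul_apply, ← mk_toWord (x := φ (of a))]
    exact (hφ.pow m).hasSign_toWord_apply_mk (hφ a).2

theorem norm_apply_mk_append (hφ : IsPositive φ) {L₁ L₂ : List (Fin N × Bool)}
    (h₁ : HasSign b L₁) (h₂ : HasSign b L₂) :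
    norm (φ (mk (L₁ ++ L₂))) = norm (φ (mk L₁)) + norm (φ (mk L₂)) := by
  rw [← mul_mk, _root_.map_mul, FreeGroup.norm,
    (hφ.hasSign_toWord_apply_mk h₁).toWord_mul (hφ.hasSign_toWord_apply_mk h₂),
    List.length_append, FreeGroup.norm, FreeGroup.norm]

theorem not_illegalPair_of_snd_eq (hφ : IsPositive φ) {x y : Fin N × Bool} (h : x.2 = y.2) :
    ¬IllegalPair φ x y := by
  rintro ⟨m, hm⟩
  have hx : HasSign x.2 [x] := by simp [HasSign]
  have hy : HasSign x.2 [y] := by simp [HasSign, h]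
  have := (hφ.pow m).norm_apply_mk_append hx hy
  rw [← mul_mk] at this
  exact hm.ne this

end IsPositive

theorem IllegalPair.of_junction (hφ : IsPositive φ) {x y p q : Fin N × Bool}
    {B Q : List (Fin N × Bool)} (hy : (φ (mk [y])).toWord = B ++ [p])
    (hx : (φ (mk [x])).toWord = q :: Q) (h : IllegalPair φ p q) : IllegalPair φ y x := by
  obtain ⟨hB, hp⟩ := hasSign_append.1 (hy ▸ hφ.hasSign_toWord_apply_mk_singleton y)
  obtain ⟨hq, hQ⟩ := (hasSign_append (L₁ := [q])).1 (hx ▸ hφ.hasSign_toWord_apply_mk_singleton x)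
  have hy' : φ (mk [y]) = mk (B ++ [p]) := by rw [← hy, mk_toWord]
  have hx' : φ (mk [x]) = mk ([q] ++ Q) := by rw [List.singleton_append, ← hx, mk_toWord]
  obtain ⟨m, hm⟩ := illegalPair_iff.1 h
  have hψ := hφ.pow m
  refine illegalPair_iff.2 ⟨m + 1, ?_⟩
  simp only [pow_succ, MulAut.mul_apply, _root_.map_mul, hy', hx']
  calc norm ((φ ^ m) (mk (B ++ [p])) * (φ ^ m) (mk ([q] ++ Q)))
      = norm ((φ ^ m) (mk B) * (φ ^ m) (mk [p] * mk [q]) * (φ ^ m) (mk Q)) := by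
        simp only [← mul_mk, _root_.map_mul, mul_assoc]
    _ ≤ norm ((φ ^ m) (mk B)) + norm ((φ ^ m) (mk [p] * mk [q])) + norm ((φ ^ m) (mk Q)) :=
        (FreeGroup.norm_mul_le _ _).trans (Nat.add_le_add_right (FreeGroup.norm_mul_le _ _) _)
    _ < norm ((φ ^ m) (mk B)) + (norm ((φ ^ m) (mk [p])) + norm ((φ ^ m) (mk [q]))) +
          norm ((φ ^ m) (mk Q)) := by gcongr
    _ = norm ((φ ^ m) (mk (B ++ [p]))) + norm ((φ ^ m) (mk ([q] ++ Q))) := by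
        rw [hψ.norm_apply_mk_append hB hp, hψ.norm_apply_mk_append hq hQ]; ring

@[simp]
theorem illegalCount_nil : illegalCount φ [] = 0 := rfl

@[simp]
theorem illegalCount_singleton (x : Fin N × Bool) : illegalCount φ [x] = 0 := rfl

theorem illegalCount_cons_cons (x y : Fin N × Bool) (l : List (Fin N × Bool)) :
    illegalCount φ (x :: y :: l) =
      illegalCount φ (y :: l) + if IllegalPair φ x y then 1 else 0 := by
  simp [illegalCount, List.countP_cons]

theorem illegalCount_append_cons_cons (A B : List (Fin N × Bool)) (p q : Fin N × Bool) :
    illegalCount φ (A ++ p :: q :: B) =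
      illegalCount φ (A ++ [p]) + illegalCount φ (q :: B) + if IllegalPair φ p q then 1 else 0 := by
  induction A with
  | nil =>
    rw [List.nil_append, illegalCount_cons_cons, List.nil_append, illegalCount_singleton]
    omega
  | cons x A ih =>
    rcases A with _ | ⟨y, A⟩
    · simp only [List.nil_append, List.cons_append, illegalCount_cons_cons,
        illegalCount_singleton]
      omega
    · simp only [List.cons_append, illegalCount_cons_cons] at ih ⊢
      omega

theorem illegalCount_append_le (A B : List (Fin N × Bool)) :
    illegalCount φ (A ++ B) ≤ illegalCount φ A + illegalCount φ B + 1 := by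
  rcases List.eq_nil_or_concat A with rfl | ⟨A, p, rfl⟩
  · simp
  rcases B with _ | ⟨q, B⟩
  · simp
  rw [List.concat_eq_append, List.append_assoc, List.singleton_append,
    illegalCount_append_cons_cons]
  split_ifs <;> omega

theorem illegalCount_add_le_append (A B : List (Fin N × Bool)) :
    illegalCount φ A + illegalCount φ B ≤ illegalCount φ (A ++ B) := by
  rcases List.eq_nil_or_concat A with rfl | ⟨A, p, rfl⟩
  · simp
  rcases B with _ | ⟨q, B⟩
  · simp
  rw [List.concat_eq_append, List.append_assoc, List.singleton_append,
    illegalCount_append_cons_cons]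
  omega

theorem List.IsPrefix.illegalCount_le {A L : List (Fin N × Bool)} (h : A <+: L) :
    illegalCount φ A ≤ illegalCount φ L := by
  obtain ⟨S, rfl⟩ := h
  exact (Nat.le_add_right _ _).trans (illegalCount_add_le_append A S)

theorem List.IsSuffix.illegalCount_le {B L : List (Fin N × Bool)} (h : B <:+ L) :
    illegalCount φ B ≤ illegalCount φ L := by
  obtain ⟨S, rfl⟩ := h
  exact (Nat.le_add_left _ _).trans (illegalCount_add_le_append S B)

theorem illegalCount_toWord_mul_le (u w : FreeGroup (Fin N)) :
    illegalCount φ (u * w).toWord ≤ illegalCount φ u.toWord + illegalCount φ w.toWord + 1 := by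
  obtain ⟨A, B, hA, hB, h⟩ := exists_prefix_suffix_reduce_append_eq
    (isReduced_toWord (x := u)) (isReduced_toWord (x := w))
  rw [toWord_mul, h]
  exact (illegalCount_append_le A B).trans
    (by gcongr; exacts [hA.illegalCount_le, hB.illegalCount_le])

theorem exists_eq_append_cons_cons_of_illegalCount_ne_zero :
    ∀ {l : List (Fin N × Bool)}, illegalCount φ l ≠ 0 →
      ∃ A p q B, l = A ++ p :: q :: B ∧ IllegalPair φ p q
  | [], h | [_], h => absurd rfl h
  | x :: y :: l, h => by
    by_cases hxy : IllegalPair φ x y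
    · exact ⟨[], x, y, l, rfl, hxy⟩
    · rw [illegalCount_cons_cons, if_neg hxy, add_zero] at h
      obtain ⟨A, p, q, B, hl, hpq⟩ := exists_eq_append_cons_cons_of_illegalCount_ne_zero h
      exact ⟨x :: A, p, q, B, by rw [hl]; rfl, hpq⟩

theorem FreeGroup.HasSign.illegalCount_eq_zero (hφ : IsPositive φ) {l : List (Fin N × Bool)}
    (h : HasSign b l) : illegalCount φ l = 0 := by
  rw [illegalCount, List.countP_eq_zero]
  rintro ⟨x, y⟩ hxy
  obtain ⟨hx, hy⟩ := List.of_mem_zip hxy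
  simpa using hφ.not_illegalPair_of_snd_eq ((h x hx).trans (h y (List.mem_of_mem_tail hy)).symm)

namespace IsPositive

theorem toWord_apply_mk_of_illegalCount_eq_zero (hφ : IsPositive φ) :
    ∀ {l : List (Fin N × Bool)}, illegalCount φ l = 0 →
      (φ (mk l)).toWord = l.flatMap (fun x => (φ (mk [x])).toWord) ∧
        illegalCount φ (φ (mk l)).toWord = 0
  | [], _ => by simp [← one_eq_mk]
  | [y], _ => ⟨by simp, (hφ.hasSign_toWord_apply_mk_singleton y).illegalCount_eq_zero hφ⟩
  | y :: x :: t, h => by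
    rw [illegalCount_cons_cons, Nat.add_eq_zero_iff, ite_eq_right_iff] at h
    obtain ⟨ht, hyx⟩ := h
    obtain ⟨hW, hW₀⟩ := hφ.toWord_apply_mk_of_illegalCount_eq_zero ht
    obtain ⟨B, p, hy⟩ := (List.eq_nil_or_concat _).resolve_left
      (toWord_apply_mk_singleton_ne_nil φ y)
    obtain ⟨q, Q, hx⟩ := List.exists_cons_of_ne_nil (toWord_apply_mk_singleton_ne_nil φ x)
    rw [List.concat_eq_append] at hy
    have hpq : ¬IllegalPair φ p q := fun h => one_ne_zero (hyx (h.of_junction hφ hy hx))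
    set W := (φ (mk (x :: t))).toWord
    have hWq : W = q :: (Q ++ t.flatMap fun x => (φ (mk [x])).toWord) := by
      rw [hW, List.flatMap_cons, hx, List.cons_append]
    have hred : IsReduced (B ++ [p] ++ W) := by
      refine IsReduced.append_overlap (hy ▸ isReduced_toWord) ?_ (List.cons_ne_nil p [])
      rw [List.singleton_append, hWq]
      exact isReduced_cons_cons.2 ⟨snd_eq_of_not_illegalPair hpq, hWq ▸ isReduced_toWord⟩
    have hyW : (φ (mk (y :: x :: t))).toWord = B ++ [p] ++ W := by
      rw [← List.singleton_append, ← mul_mk, _root_.map_mul, toWord_mul, hy, hred.reduce_eq]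
    refine ⟨by simp only [hyW, hW, List.flatMap_cons, hy, List.append_assoc], ?_⟩
    rw [hyW, hWq, List.append_assoc, List.singleton_append, illegalCount_append_cons_cons, ← hWq,
      hW₀, if_neg hpq, ← hy, (hφ.hasSign_toWord_apply_mk_singleton y).illegalCount_eq_zero hφ]

theorem illegalCount_toWord_apply_mk_le (hφ : IsPositive φ) (l : List (Fin N × Bool)) :
    illegalCount φ (φ (mk l)).toWord ≤ illegalCount φ l := by
  induction hn : illegalCount φ l using Nat.strong_induction_on generalizing l with
  | _ n ih =>
    rcases eq_or_ne n 0 with rfl | hn₀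
    · exact (hφ.toWord_apply_mk_of_illegalCount_eq_zero hn).2.le
    obtain ⟨A, p, q, B, rfl, hpq⟩ :=
      exists_eq_append_cons_cons_of_illegalCount_ne_zero (hn ▸ hn₀)
    have hsplit := illegalCount_append_cons_cons (φ := φ) A B p q
    rw [if_pos hpq, hn] at hsplit
    calc illegalCount φ (φ (mk (A ++ p :: q :: B))).toWord
        = illegalCount φ (φ (mk (A ++ [p])) * φ (mk (q :: B))).toWord := by
          rw [← _root_.map_mul, mul_mk, List.append_assoc, List.singleton_append]
      _ ≤ illegalCount φ (φ (mk (A ++ [p]))).toWord +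
            illegalCount φ (φ (mk (q :: B))).toWord + 1 := illegalCount_toWord_mul_le _ _
      _ ≤ illegalCount φ (A ++ [p]) + illegalCount φ (q :: B) + 1 := by
          gcongr <;> exact ih _ (by omega) _ rfl
      _ = n := hsplit.symm

end IsPositive

theorem illegalCount_apply_le_general {N : ℕ}
    (φ : MulAut (FreeGroup (Fin N))) (hpos : IsPositive φ)
    (v : FreeGroup (Fin N)) :
    illegalCount φ ((φ v).toWord) ≤ illegalCount φ v.toWord := by
  simpa only [mk_toWord] using hpos.illegalCount_toWord_apply_mk_le v.toWord

/-- Applying an `A_N`-positive automorphism cannot increase the number of illegal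
pairs of a word. -/
theorem illegalCount_apply_le {N : ℕ} (hN : 2 ≤ N)
    (φ : MulAut (FreeGroup (Fin N))) (hpos : IsPositive φ)
    (v : FreeGroup (Fin N)) :
    illegalCount φ ((φ v).toWord) ≤ illegalCount φ v.toWord :=
  illegalCount_apply_le_general φ hpos v
end

section
/- Let B be a type and σ : B → List B with σ(b) ≠ [] for every b : B. Let v : List B be nonempty and let p, s : List B with s ≠ [] be such that v.flatMap σ = p ++ v ++ s. Then there exist an index i < v.length and lists q, r : List B with r ≠ [] such that σ(v[i]) = q ++ [v[i]] ++ r, (v.take i).flatMap σ ++ q = p ++ v.take i, and r ++ (v.drop (i+1)).flatMap σ = (v.drop (i+1)) ++ s. (Existence of a "singular letter" of v whose image contains that letter followed by a nonempty word, established in the proof of the paper's Lemma "genwordspart1" for a word v with no illegal pairs satisfying φ(v) = p*v*s with s nonempty.) -/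
/-!
Let `f j` be the length of the image of the prefix `v.take j`. Then `f 0 = 0 ≤ |p|` while
`f |v| = |p| + |v| + |s| > |p| + |v|`, so there is a step `i < |v|` with `f i ≤ |p| + i` and
`f (i + 1) ≥ |p| + i + 2`. The image `σ (v[i])` then covers position `|p| + i` of `p ++ v ++ s`,
which holds `v[i]`, and at least one position after it.
-/

theorem Nat.exists_lt_and_not_succ_of_zero_of_not {P : ℕ → Prop} {n : ℕ} (h₀ : P 0) (hn : ¬P n) :
    ∃ i < n, P i ∧ ¬P (i + 1) := by
  induction n with
  | zero => exact absurd h₀ hn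
  | succ n ih =>
    by_cases hPn : P n
    · exact ⟨n, n.lt_succ_self, hPn, hn⟩
    · obtain ⟨i, hi, hPi, hPi'⟩ := ih hPn
      exact ⟨i, by omega, hPi, hPi'⟩

namespace List

variable {α : Type*}

theorem exists_eq_append_of_append_eq_append {a b c d : List α} (h : a ++ b = c ++ d)
    (hac : a.length ≤ c.length) : ∃ e, c = a ++ e ∧ b = e ++ d := by
  rcases append_eq_append_iff.mp h with h' | ⟨e, rfl, rfl⟩
  · exact h'
  · obtain rfl : e = [] := by simpa using hac
    exact ⟨[], by simp, by simp⟩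

theorem exists_eq_append_singleton_append_of_append_eq {a x c l r : List α} {y : α}
    (h : a ++ x ++ c = l ++ [y] ++ r) (hal : a.length ≤ l.length)
    (hx : l.length + 1 < a.length + x.length) :
    ∃ q t, t ≠ [] ∧ x = q ++ [y] ++ t ∧ a ++ q = l ∧ t ++ c = r := by
  rw [append_assoc, append_assoc] at h
  obtain ⟨q, rfl, hq⟩ := exists_eq_append_of_append_eq_append h hal
  rw [← append_assoc] at hq
  obtain ⟨t, rfl, rfl⟩ := exists_eq_append_of_append_eq_append hq.symm
    (by simp only [length_append, length_singleton] at hx ⊢; omega)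
  refine ⟨q, t, ?_, rfl, rfl, rfl⟩
  rintro rfl
  simp only [length_append, length_singleton, length_nil] at hx
  omega

end List

theorem exists_singular_letter_general {B : Type*} (σ : B → List B)
    (v p s : List B) (hs : s ≠ [])
    (h : v.flatMap σ = p ++ v ++ s) :
    ∃ (i : ℕ) (hi : i < v.length) (q r : List B), r ≠ [] ∧
      σ (v[i]'hi) = q ++ [v[i]'hi] ++ r ∧
      (v.take i).flatMap σ ++ q = p ++ v.take i ∧
      r ++ (v.drop (i + 1)).flatMap σ = v.drop (i + 1) ++ s := by
  have hend : ¬((v.take v.length).flatMap σ).length ≤ p.length + v.length := by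
    simpa [h, List.length_pos_iff] using hs
  obtain ⟨i, hi, hcovers, hexceeds⟩ :=
    Nat.exists_lt_and_not_succ_of_zero_of_not
      (P := fun j ↦ ((v.take j).flatMap σ).length ≤ p.length + j) (by simp) hend
  rw [List.take_succ_eq_append_getElem hi, List.flatMap_append, List.flatMap_singleton,
    List.length_append] at hexceeds
  have hsplit : (v.take i).flatMap σ ++ σ v[i] ++ (v.drop (i + 1)).flatMap σ
      = p ++ v.take i ++ [v[i]] ++ (v.drop (i + 1) ++ s) := by
    have hdecomp : v.take i ++ v[i] :: v.drop (i + 1) = v := by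
      rw [List.getElem_cons_drop, List.take_append_drop]
    calc _ = (v.take i ++ v[i] :: v.drop (i + 1)).flatMap σ := by
          simp only [List.flatMap_append, List.flatMap_cons, List.append_assoc]
      _ = p ++ (v.take i ++ v[i] :: v.drop (i + 1)) ++ s := by rw [hdecomp, h]
      _ = _ := by simp only [List.append_assoc, List.cons_append, List.nil_append]
  exact ⟨i, hi, List.exists_eq_append_singleton_append_of_append_eq hsplit
    (by simpa [hi.le] using hcovers)
    (by rw [List.length_append, List.length_take_of_le hi.le]; omega)⟩

/-- Existence of a "singular letter": if `σ` sends every letter to a nonempty list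
and `v.flatMap σ = p ++ v ++ s` with `v` and `s` nonempty, then some letter `v[i]`
occurs in its own image `σ(v[i]) = q ++ [v[i]] ++ r` with `r` nonempty, compatibly
with the decomposition: `(v.take i).flatMap σ ++ q = p ++ v.take i` and
`r ++ (v.drop (i+1)).flatMap σ = v.drop (i+1) ++ s`. -/
theorem exists_singular_letter {B : Type*} (σ : B → List B)
    (hσ : ∀ b : B, σ b ≠ []) (v p s : List B) (hv : v ≠ []) (hs : s ≠ [])
    (h : v.flatMap σ = p ++ v ++ s) :
    ∃ (i : ℕ) (hi : i < v.length) (q r : List B), r ≠ [] ∧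
      σ (v[i]'hi) = q ++ [v[i]'hi] ++ r ∧
      (v.take i).flatMap σ ++ q = p ++ v.take i ∧
      r ++ (v.drop (i + 1)).flatMap σ = v.drop (i + 1) ++ s :=
  exists_singular_letter_general σ v p s hs h
end
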